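/- Let A be a self-adjoint operator in ℋ, p ∈ ℕ, and B ∈ C_{p−1}(A) with B = B*; then A + B, with domain Dom(A), is self-adjoint. Then C_k(A) = C_k(A+B) for every k = 0, 1, …, p. -/

import Mathlib

/-!
The perturbation is handled through a strong form of the commutators: `X ∈ C_n(A)` iff there
are bounded `Y₀ = X, Y₁, …, Yₙ` such that each `Y_j` leaves `Dom A` invariant and
`A Y_j - Y_j A = Y_{j+1}` on `Dom A`. Such a chain gives the forms `α_k` by the Pascal recursion
`α_{k+1}(ξ, η) = α_k(ξ, A η) - α_k(A ξ, η)`. Conversely, the identity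
`⟨Z ξ, A η⟩ - ⟨Z A ξ, η⟩ = ⟨W ξ, η⟩` on `Dom(A^{k+1})` extends to `Dom A` because the
regularizers `J_c = ic (A + ic)⁻¹` commute with `A`, raise the domain and tend strongly to the
identity; maximality of `Dom A` then turns it into the strong identity.

For the strong commutators `[A + B, X] = [A, X] + [B, X]`, and chains are closed under products
(Leibniz rule), so by induction on `n` a chain of length `n` for `A` is one for `A + B` as soon as
`B` has a chain of length `n - 1`. Applied once more to `A = (A + B) + (-B)`, this gives the
reverse inclusion.
-/

open scoped ComplexOrder
open Classical

variable {ℋ : Type*} [NormedAddCommGroup ℋ] [InnerProductSpace ℂ ℋ] [CompleteSpace ℋ]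

/-- The everywhere-defined extension (by `0` outside the domain) of an unbounded operator
`Aop` with domain the submodule `D`. -/
noncomputable def Aext (D : Submodule ℂ ℋ) (Aop : ↥D →ₗ[ℂ] ℋ) (ψ : ℋ) : ℋ :=
  if h : ψ ∈ D then Aop ⟨ψ, h⟩ else 0

/-- `Dom(A^n)`: the set of vectors to which `A` can be applied `n` times. -/
def domPow (D : Submodule ℂ ℋ) (Aop : ↥D →ₗ[ℂ] ℋ) (n : ℕ) : Set ℋ :=
  {ψ : ℋ | ∀ k, k < n → (Aext D Aop)^[k] ψ ∈ D}

/-- The sesquilinear form `α_n(ξ,η) = Σ_{k=0}^{n} C(n,k)(−1)^k ⟨X A^k ξ, A^{n−k} η⟩`,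
defined (meaningfully) on `Dom(A^n)`. -/
noncomputable def commForm (D : Submodule ℂ ℋ) (Aop : ↥D →ₗ[ℂ] ℋ)
    (X : ℋ →L[ℂ] ℋ) (n : ℕ) (ξ η : ℋ) : ℂ :=
  ∑ k ∈ Finset.range (n + 1),
    (n.choose k : ℂ) * (-1) ^ k *
      (inner ℂ (X ((Aext D Aop)^[k] ξ)) ((Aext D Aop)^[n - k] η) : ℂ)

/-- `ad_A^n X` exists in `B(ℋ)` and equals the bounded operator `Z`: the form `α_n` is
represented by `Z` on `Dom(A^n)`. -/
def AdExistsN (D : Submodule ℂ ℋ) (Aop : ↥D →ₗ[ℂ] ℋ) (n : ℕ) (X Z : ℋ →L[ℂ] ℋ) : Prop :=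
  ∀ ξ ∈ domPow D Aop n, ∀ η ∈ domPow D Aop n,
    commForm D Aop X n ξ η = (inner ℂ (Z ξ) η : ℂ)

/-- `X ∈ C_n(A)`: the multiple commutators `ad_A^k X` exist in `B(ℋ)` for `k = 0,…,n`. -/
def InCn (D : Submodule ℂ ℋ) (Aop : ↥D →ₗ[ℂ] ℋ) (n : ℕ) (X : ℋ →L[ℂ] ℋ) : Prop :=
  ∀ k, k ≤ n → ∃ Z : ℋ →L[ℂ] ℋ, AdExistsN D Aop k X Z

/-- Self-adjointness of the (in general unbounded) operator `Aop` with domain `D`: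
it is densely defined, symmetric, and its domain is maximal. -/
def IsSelfAdjointOp (D : Submodule ℂ ℋ) (Aop : ↥D →ₗ[ℂ] ℋ) : Prop :=
  Dense (D : Set ℋ) ∧
    (∀ u v : ↥D, (inner ℂ (Aop u) (v : ℋ) : ℂ) = inner ℂ (u : ℋ) (Aop v)) ∧
    ∀ v w : ℋ, (∀ u : ↥D, (inner ℂ (Aop u) v : ℂ) = inner ℂ (u : ℋ) w) → v ∈ D

open Filter Topology
open scoped InnerProductSpace

theorem cauchySeq_of_dist_le_mul {α β : Type*} [PseudoMetricSpace α] [PseudoMetricSpace β]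
    {f : ℕ → α} {g : ℕ → β} {C : ℝ} (hfg : ∀ m n, dist (f m) (f n) ≤ C * dist (g m) (g n))
    (hg : CauchySeq g) : CauchySeq f := by
  rw [cauchySeq_iff_tendsto_dist_atTop_0] at hg ⊢
  exact squeeze_zero (fun _ => dist_nonneg) (fun n => hfg _ _) (by simpa using hg.const_mul C)

section

variable {ℋ : Type*} [NormedAddCommGroup ℋ] [InnerProductSpace ℂ ℋ]
  {D : Submodule ℂ ℋ} {Aop : ↥D →ₗ[ℂ] ℋ}

theorem Aext_of_mem {ψ : ℋ} (h : ψ ∈ D) : Aext D Aop ψ = Aop ⟨ψ, h⟩ := dif_pos h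

theorem mem_domPow_zero (ψ : ℋ) : ψ ∈ domPow D Aop 0 := fun k hk => absurd hk (Nat.not_lt_zero k)

theorem domPow_mono {m n : ℕ} (h : m ≤ n) : domPow D Aop n ⊆ domPow D Aop m :=
  fun _ hψ k hk => hψ k (hk.trans_le h)

theorem mem_domPow_succ_iff {ψ : ℋ} {k : ℕ} :
    ψ ∈ domPow D Aop (k + 1) ↔ ψ ∈ D ∧ Aext D Aop ψ ∈ domPow D Aop k := by
  refine ⟨fun h => ⟨h 0 k.succ_pos, fun j hj => h (j + 1) (by omega)⟩, ?_⟩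
  rintro ⟨h0, h⟩ (_ | j) hj
  exacts [h0, h j (by omega)]

theorem IsSelfAdjointOp.exists_apply_eq_of_inner (hA : IsSelfAdjointOp D Aop) {v w : ℋ}
    (h : ∀ u : D, ⟪Aop u, v⟫_ℂ = ⟪(u : ℋ), w⟫_ℂ) : ∃ hv : v ∈ D, Aop ⟨v, hv⟩ = w := by
  obtain ⟨hD, hsym, hmax⟩ := hA
  have hv : v ∈ D := hmax v w h
  refine ⟨hv, sub_eq_zero.mp (hD.eq_zero_of_inner_right ℂ fun u hu => ?_)⟩
  rw [inner_sub_right, ← hsym ⟨u, hu⟩ ⟨v, hv⟩, h ⟨u, hu⟩, sub_self]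

theorem IsSelfAdjointOp.exists_apply_eq_of_tendsto (hA : IsSelfAdjointOp D Aop) {u : ℕ → D}
    {v w : ℋ} (hu : Tendsto (fun n => (u n : ℋ)) atTop (𝓝 v))
    (hAu : Tendsto (fun n => Aop (u n)) atTop (𝓝 w)) : ∃ hv : v ∈ D, Aop ⟨v, hv⟩ = w :=
  hA.exists_apply_eq_of_inner fun x => tendsto_nhds_unique
    ((tendsto_const_nhds.inner hu).congr fun n => hA.2.1 x (u n))
    (tendsto_const_nhds.inner hAu)

variable (D Aop) in
noncomputable def iShift (c : ℝ) : ↥D →ₗ[ℂ] ℋ :=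
  Aop + ((c : ℂ) * Complex.I) • D.subtype

theorem iShift_apply (c : ℝ) (u : D) :
    iShift D Aop c u = Aop u + ((c : ℂ) * Complex.I) • (u : ℋ) := rfl

section Symmetric

variable (hsym : ∀ u v : D, ⟪Aop u, (v : ℋ)⟫_ℂ = ⟪(u : ℋ), Aop v⟫_ℂ)
include hsym

theorem norm_iShift_sq (c : ℝ) (u : D) :
    ‖iShift D Aop c u‖ ^ 2 = ‖Aop u‖ ^ 2 + c ^ 2 * ‖(u : ℋ)‖ ^ 2 := by
  have him : (⟪Aop u, (u : ℋ)⟫_ℂ).im = 0 := by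
    rw [← Complex.conj_eq_iff_im, inner_conj_symm, hsym]
  rw [iShift_apply, @norm_add_sq ℂ, inner_smul_right, norm_smul]
  simp [him, mul_pow]

theorem mul_norm_le_norm_iShift {c : ℝ} (hc : 0 ≤ c) (u : D) :
    c * ‖(u : ℋ)‖ ≤ ‖iShift D Aop c u‖ := by
  refine (pow_le_pow_iff_left₀ (by positivity) (norm_nonneg _) two_ne_zero).mp ?_
  rw [norm_iShift_sq hsym, mul_pow]
  nlinarith [sq_nonneg ‖Aop u‖]

theorem norm_le_norm_iShift (c : ℝ) (u : D) : ‖Aop u‖ ≤ ‖iShift D Aop c u‖ := by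
  refine (pow_le_pow_iff_left₀ (norm_nonneg _) (norm_nonneg _) two_ne_zero).mp ?_
  rw [norm_iShift_sq hsym]
  nlinarith [sq_nonneg c, sq_nonneg ‖(u : ℋ)‖]

theorem iShift_injective {c : ℝ} (hc : 0 < c) : Function.Injective (iShift D Aop c) := by
  refine (injective_iff_map_eq_zero _).mpr fun u hu => ?_
  have := mul_norm_le_norm_iShift hsym hc.le u
  rw [hu, norm_zero] at this
  exact Subtype.ext (norm_le_zero_iff.mp (nonpos_of_mul_nonpos_right this hc))

end Symmetric

theorem IsSelfAdjointOp.isClosed_range_iShift [CompleteSpace ℋ] (hA : IsSelfAdjointOp D Aop)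
    {c : ℝ} (hc : 0 < c) : IsClosed (LinearMap.range (iShift D Aop c) : Set ℋ) := by
  refine IsSeqClosed.isClosed fun x y hx hxy => ?_
  choose u hu using hx
  have hdiff : ∀ m n, x m - x n = iShift D Aop c (u m - u n) := fun m n => by
    rw [map_sub, hu, hu]
  have hu_cauchy : CauchySeq fun n => (u n : ℋ) :=
    cauchySeq_of_dist_le_mul (C := c⁻¹) (fun m n => by
      rw [dist_eq_norm, dist_eq_norm, hdiff, le_inv_mul_iff₀ hc, ← Submodule.coe_sub]
      exact mul_norm_le_norm_iShift hA.2.1 hc.le _) hxy.cauchySeq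
  have hAu_cauchy : CauchySeq fun n => Aop (u n) :=
    cauchySeq_of_dist_le_mul (C := 1) (fun m n => by
      rw [dist_eq_norm, dist_eq_norm, hdiff, one_mul, ← map_sub]
      exact norm_le_norm_iShift hA.2.1 c _) hxy.cauchySeq
  obtain ⟨v, hv⟩ := cauchySeq_tendsto_of_complete hu_cauchy
  obtain ⟨w, hw⟩ := cauchySeq_tendsto_of_complete hAu_cauchy
  obtain ⟨hvD, rfl⟩ := hA.exists_apply_eq_of_tendsto hv hw
  refine ⟨⟨v, hvD⟩, tendsto_nhds_unique ?_ hxy⟩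
  rw [show x = fun n => iShift D Aop c (u n) from funext fun n => (hu n).symm]
  exact hw.add (hv.const_smul ((c : ℂ) * Complex.I))

theorem IsSelfAdjointOp.orthogonal_range_iShift (hA : IsSelfAdjointOp D Aop) {c : ℝ}
    (hc : 0 < c) : (LinearMap.range (iShift D Aop c))ᗮ = ⊥ := by
  refine (Submodule.eq_bot_iff _).mpr fun z hz => ?_
  have hz' : ∀ u : D, ⟪iShift D Aop c u, z⟫_ℂ = 0 := fun u =>
    Submodule.inner_right_of_mem_orthogonal (LinearMap.mem_range_self _ u) hz
  -- `z ⊥ ran (A + ic)` says `A* z = ic z`, so `z ∈ D` and `(A + ic) z = 2ic z ⊥ z`.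
  obtain ⟨hzD, hAz⟩ :=
      hA.exists_apply_eq_of_inner (v := z) (w := ((c : ℂ) * Complex.I) • z) fun u => by
    have := hz' u
    rw [iShift_apply, inner_add_left, inner_smul_left] at this
    rw [inner_smul_right]
    simp only [map_mul, Complex.conj_ofReal, Complex.conj_I] at this
    linear_combination this
  have h2 := hz' ⟨z, hzD⟩
  rw [iShift_apply, hAz, inner_add_left, inner_smul_left] at h2
  have hne : (2 * (starRingEnd ℂ) ((c : ℂ) * Complex.I)) ≠ 0 := by simp [hc.ne']
  exact inner_self_eq_zero.mp ((mul_eq_zero.mp (by linear_combination h2)).resolve_left hne)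

theorem IsSelfAdjointOp.surjective_iShift [CompleteSpace ℋ] (hA : IsSelfAdjointOp D Aop)
    {c : ℝ} (hc : 0 < c) : Function.Surjective (iShift D Aop c) := by
  rw [← LinearMap.range_eq_top, ← (hA.isClosed_range_iShift hc).submodule_topologicalClosure_eq,
    Submodule.topologicalClosure_eq_top_iff]
  exact hA.orthogonal_range_iShift hc

section Regularizer

variable [CompleteSpace ℋ] (hA : IsSelfAdjointOp D Aop) {c : ℝ} (hc : 0 < c)

noncomputable def IsSelfAdjointOp.resolvent : ℋ ≃ₗ[ℂ] D :=
  (LinearEquiv.ofBijective (iShift D Aop c)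
    ⟨iShift_injective hA.2.1 hc, hA.surjective_iShift hc⟩).symm

noncomputable def IsSelfAdjointOp.regularizer : ℋ →ₗ[ℂ] ℋ :=
  ((c : ℂ) * Complex.I) • (D.subtype ∘ₗ (hA.resolvent hc).toLinearMap)

theorem IsSelfAdjointOp.iShift_resolvent (y : ℋ) : iShift D Aop c (hA.resolvent hc y) = y :=
  (LinearEquiv.ofBijective (iShift D Aop c) _).apply_symm_apply y

theorem IsSelfAdjointOp.resolvent_iShift (u : D) : hA.resolvent hc (iShift D Aop c u) = u :=
  LinearEquiv.ofBijective_symm_apply_apply _ u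

theorem IsSelfAdjointOp.regularizer_apply (y : ℋ) :
    hA.regularizer hc y = ((c : ℂ) * Complex.I) • (hA.resolvent hc y : ℋ) := rfl

theorem IsSelfAdjointOp.regularizer_mem (y : ℋ) : hA.regularizer hc y ∈ D :=
  D.smul_mem _ (hA.resolvent hc y).2

theorem IsSelfAdjointOp.mul_norm_resolvent_le (y : ℋ) : c * ‖(hA.resolvent hc y : ℋ)‖ ≤ ‖y‖ := by
  simpa only [hA.iShift_resolvent hc] using mul_norm_le_norm_iShift hA.2.1 hc.le (hA.resolvent hc y)

theorem IsSelfAdjointOp.norm_regularizer_le (y : ℋ) : ‖hA.regularizer hc y‖ ≤ ‖y‖ := by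
  simpa [hA.regularizer_apply, norm_smul, abs_of_pos hc] using hA.mul_norm_resolvent_le hc y

theorem IsSelfAdjointOp.apply_resolvent (y : ℋ) :
    Aop (hA.resolvent hc y) = y - hA.regularizer hc y := by
  rw [eq_sub_iff_add_eq, hA.regularizer_apply, ← iShift_apply, hA.iShift_resolvent]

theorem IsSelfAdjointOp.sub_regularizer (u : D) :
    (u : ℋ) - hA.regularizer hc u = hA.resolvent hc (Aop u) := by
  have h : iShift D Aop c (u - ((c : ℂ) * Complex.I) • hA.resolvent hc u) = Aop u := by
    rw [map_sub, map_smul, hA.iShift_resolvent, iShift_apply, add_sub_cancel_right]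
  rw [← h, hA.resolvent_iShift, hA.regularizer_apply]
  rfl

theorem IsSelfAdjointOp.Aext_regularizer {ψ : ℋ} (hψ : ψ ∈ D) :
    Aext D Aop (hA.regularizer hc ψ) = hA.regularizer hc (Aext D Aop ψ) := by
  rw [Aext_of_mem (hA.regularizer_mem hc ψ), Aext_of_mem hψ, hA.regularizer_apply hc (Aop _),
    ← hA.sub_regularizer hc ⟨ψ, hψ⟩]
  have : (⟨hA.regularizer hc ψ, hA.regularizer_mem hc ψ⟩ : D) =
      ((c : ℂ) * Complex.I) • hA.resolvent hc ψ := rfl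
  rw [this, map_smul, hA.apply_resolvent]

theorem IsSelfAdjointOp.lipschitzWith_regularizer : LipschitzWith 1 (hA.regularizer hc) :=
  AddMonoidHomClass.lipschitz_of_bound_nnnorm _ 1 fun y => by
    simpa [← NNReal.coe_le_coe] using hA.norm_regularizer_le hc y

theorem IsSelfAdjointOp.norm_regularizer_sub_le (u : D) :
    ‖hA.regularizer hc u - u‖ ≤ ‖Aop u‖ / c := by
  rw [norm_sub_rev, hA.sub_regularizer, le_div_iff₀ hc, mul_comm]
  exact hA.mul_norm_resolvent_le hc _

theorem IsSelfAdjointOp.tendsto_regularizer (y : ℋ) :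
    Tendsto (fun m : ℕ => hA.regularizer (Nat.cast_add_one_pos m) y) atTop (𝓝 y) := by
  let S := {y : ℋ | Tendsto (fun m : ℕ => hA.regularizer (Nat.cast_add_one_pos m) y) atTop
    (𝓝 (id y))}
  have hS : IsClosed S := (LipschitzWith.uniformEquicontinuous _ 1 fun m =>
    hA.lipschitzWith_regularizer (Nat.cast_add_one_pos m)).equicontinuous.isClosed_setOfPred_tendsto
    continuous_id
  have hDS : (D : Set ℋ) ⊆ S := fun u hu => by
    show Tendsto _ _ _
    rw [tendsto_iff_norm_sub_tendsto_zero]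
    refine squeeze_zero (fun _ => norm_nonneg _)
      (fun m => hA.norm_regularizer_sub_le (Nat.cast_add_one_pos m) ⟨u, hu⟩) ?_
    simpa only [mul_one_div, mul_zero] using
      tendsto_one_div_add_atTop_nhds_zero_nat.const_mul ‖Aop ⟨u, hu⟩‖
  exact hS.closure_subset_iff.mpr hDS (hA.1.closure_eq ▸ Set.mem_univ y)

theorem IsSelfAdjointOp.tendsto_regularizer_iterate (k : ℕ) (y : ℋ) :
    Tendsto (fun m : ℕ => (hA.regularizer (Nat.cast_add_one_pos m))^[k] y) atTop (𝓝 y) := by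
  induction k with
  | zero => exact tendsto_const_nhds
  | succ k ih =>
    rw [tendsto_iff_norm_sub_tendsto_zero] at ih ⊢
    have hJ := tendsto_iff_norm_sub_tendsto_zero.mp (hA.tendsto_regularizer y)
    refine squeeze_zero (fun _ => norm_nonneg _) (fun m => ?_) (by simpa using ih.add hJ)
    set J := hA.regularizer (Nat.cast_add_one_pos m)
    calc ‖J^[k + 1] y - y‖ = ‖J (J^[k] y - y) + (J y - y)‖ := by
          rw [Function.iterate_succ_apply', map_sub, sub_add_sub_cancel]
      _ ≤ ‖J^[k] y - y‖ + ‖J y - y‖ :=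
          (norm_add_le _ _).trans (add_le_add_left (hA.norm_regularizer_le _ _) _)

theorem IsSelfAdjointOp.regularizer_iterate_mem_domPow (k : ℕ) {ψ : ℋ}
    (hψ : ψ ∈ D) : (hA.regularizer hc)^[k] ψ ∈ domPow D Aop (k + 1) ∧
      Aext D Aop ((hA.regularizer hc)^[k] ψ) = (hA.regularizer hc)^[k] (Aext D Aop ψ) := by
  induction k generalizing ψ with
  | zero => exact ⟨mem_domPow_succ_iff.mpr ⟨hψ, mem_domPow_zero _⟩, rfl⟩
  | succ k ih =>
    obtain ⟨hmem, hcomm⟩ := ih (hA.regularizer_mem hc ψ)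
    have hcomm' : Aext D Aop ((hA.regularizer hc)^[k + 1] ψ) =
        (hA.regularizer hc)^[k + 1] (Aext D Aop ψ) := by
      rw [Function.iterate_succ_apply, hcomm, hA.Aext_regularizer hc hψ,
        ← Function.iterate_succ_apply]
    refine ⟨mem_domPow_succ_iff.mpr ⟨(mem_domPow_succ_iff.mp hmem).1, ?_⟩, hcomm'⟩
    rw [hcomm', Function.iterate_succ_apply]
    exact (ih (hA.regularizer_mem hc _)).1

include hA in
theorem IsSelfAdjointOp.exists_tendsto_domPow (k : ℕ) (u : D) :
    ∃ v : ℕ → ℋ, (∀ m, v m ∈ domPow D Aop (k + 1)) ∧ Tendsto v atTop (𝓝 u) ∧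
      Tendsto (fun m => Aext D Aop (v m)) atTop (𝓝 (Aop u)) := by
  refine ⟨fun m => (hA.regularizer (Nat.cast_add_one_pos m))^[k] u,
    fun m => (hA.regularizer_iterate_mem_domPow _ k u.2).1,
    hA.tendsto_regularizer_iterate k u, ?_⟩
  simpa only [(hA.regularizer_iterate_mem_domPow _ k u.2).2, Aext_of_mem u.2] using
    hA.tendsto_regularizer_iterate k (Aop u)

end Regularizer

theorem commForm_succ (X : ℋ →L[ℂ] ℋ) (n : ℕ) (ξ η : ℋ) :
    commForm D Aop X (n + 1) ξ η =
      commForm D Aop X n ξ (Aext D Aop η) - commForm D Aop X n (Aext D Aop ξ) η := by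
  let f : ℕ → ℕ → ℂ := fun i j =>
    (-1) ^ i * ⟪X ((Aext D Aop)^[i] ξ), (Aext D Aop)^[j] η⟫_ℂ
  have h1 : commForm D Aop X (n + 1) ξ η =
      ∑ i ∈ Finset.range (n + 2), (n + 1).choose i • f i (n + 1 - i) :=
    Finset.sum_congr rfl fun i _ => by simp only [f, nsmul_eq_mul, mul_assoc]
  have h2 : commForm D Aop X n ξ (Aext D Aop η) =
      ∑ i ∈ Finset.range (n + 1), n.choose i • f i (n + 1 - i) :=
    Finset.sum_congr rfl fun i hi => by
      rw [show n + 1 - i = n - i + 1 by grind, ← Function.iterate_succ_apply]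
      simp only [f, nsmul_eq_mul, mul_assoc]
  have h3 : commForm D Aop X n (Aext D Aop ξ) η =
      -∑ i ∈ Finset.range (n + 1), n.choose i • f (i + 1) (n - i) := by
    rw [← Finset.sum_neg_distrib]
    refine Finset.sum_congr rfl fun i _ => ?_
    simp only [f, nsmul_eq_mul, Function.iterate_succ_apply, pow_succ]
    ring
  rw [h1, h2, h3, Finset.sum_choose_succ_nsmul]
  ring

theorem adExistsN_zero (X : ℋ →L[ℂ] ℋ) : AdExistsN D Aop 0 X X := by
  intro ξ _ η _
  simp [commForm]

theorem AdExistsN.eq_of_zero [CompleteSpace ℋ] {X Z : ℋ →L[ℂ] ℋ}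
    (h : AdExistsN D Aop 0 X Z) : Z = X :=
  ContinuousLinearMap.ext fun ψ => ext_inner_right ℂ fun v => by
    simpa [commForm] using (h ψ (mem_domPow_zero ψ) v (mem_domPow_zero v)).symm

theorem AdExistsN.succ_iff {n : ℕ} {X Z W : ℋ →L[ℂ] ℋ} (h : AdExistsN D Aop n X Z) :
    AdExistsN D Aop (n + 1) X W ↔ ∀ ξ ∈ domPow D Aop (n + 1), ∀ η ∈ domPow D Aop (n + 1),
      ⟪Z ξ, Aext D Aop η⟫_ℂ - ⟪Z (Aext D Aop ξ), η⟫_ℂ = ⟪W ξ, η⟫_ℂ := by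
  refine forall₂_congr fun ξ hξ => forall₂_congr fun η hη => ?_
  rw [commForm_succ, h ξ (domPow_mono n.le_succ hξ) _ (mem_domPow_succ_iff.mp hη).2,
    h _ (mem_domPow_succ_iff.mp hξ).2 η (domPow_mono n.le_succ hη)]

variable (D Aop) in
def HasCommutator (X Y : ℋ →L[ℂ] ℋ) : Prop :=
  ∀ ξ : D, ∃ h : X ξ ∈ D, Aop ⟨X ξ, h⟩ = X (Aop ξ) + Y ξ

theorem HasCommutator.inner_eq (hsym : ∀ u v : D, ⟪Aop u, (v : ℋ)⟫_ℂ = ⟪(u : ℋ), Aop v⟫_ℂ)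
    {X Y : ℋ →L[ℂ] ℋ} (h : HasCommutator D Aop X Y) (ξ η : D) :
    ⟪X ξ, Aop η⟫_ℂ - ⟪X (Aop ξ), (η : ℋ)⟫_ℂ = ⟪Y ξ, (η : ℋ)⟫_ℂ := by
  obtain ⟨hm, he⟩ := h ξ
  rw [← hsym ⟨X ξ, hm⟩ η, he, inner_add_left, add_sub_cancel_left]

theorem IsSelfAdjointOp.hasCommutator_of_inner (hA : IsSelfAdjointOp D Aop) {X Y : ℋ →L[ℂ] ℋ}
    (h : ∀ ξ η : D, ⟪X ξ, Aop η⟫_ℂ - ⟪X (Aop ξ), (η : ℋ)⟫_ℂ = ⟪Y ξ, (η : ℋ)⟫_ℂ) :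
    HasCommutator D Aop X Y := fun ξ =>
  hA.exists_apply_eq_of_inner fun u => by
    rw [← inner_conj_symm (u : ℋ), inner_add_left, ← h ξ u, add_sub_cancel,
      inner_conj_symm]

theorem IsSelfAdjointOp.hasCommutator_of_domPow [CompleteSpace ℋ] (hA : IsSelfAdjointOp D Aop)
    (k : ℕ) {Z W : ℋ →L[ℂ] ℋ}
    (h : ∀ ξ ∈ domPow D Aop (k + 1), ∀ η ∈ domPow D Aop (k + 1),
      ⟪Z ξ, Aext D Aop η⟫_ℂ - ⟪Z (Aext D Aop ξ), η⟫_ℂ = ⟪W ξ, η⟫_ℂ) :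
    HasCommutator D Aop Z W := by
  refine hA.hasCommutator_of_inner fun ξ η => ?_
  obtain ⟨x, hxD, hx, hAx⟩ := hA.exists_tendsto_domPow k ξ
  obtain ⟨y, hyD, hy, hAy⟩ := hA.exists_tendsto_domPow k η
  have hZ := Z.continuous.tendsto
  exact tendsto_nhds_unique
    ((((hZ _).comp hx).inner hAy).sub (((hZ _).comp hAx).inner hy))
    ((((W.continuous.tendsto _).comp hx).inner hy).congr fun m => (h _ (hxD m) _ (hyD m)).symm)

variable {B X X' Y Y' W V : ℋ →L[ℂ] ℋ}

theorem hasCommutator_zero : HasCommutator D Aop 0 0 := fun _ =>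
  ⟨D.zero_mem, by simp only [zero_apply, add_zero]; exact map_zero Aop⟩

theorem HasCommutator.add (h : HasCommutator D Aop X Y) (h' : HasCommutator D Aop X' Y') :
    HasCommutator D Aop (X + X') (Y + Y') := fun ξ => by
  obtain ⟨hm, he⟩ := h ξ
  obtain ⟨hm', he'⟩ := h' ξ
  refine ⟨D.add_mem hm hm', ?_⟩
  rw [show (⟨(X + X') ξ, D.add_mem hm hm'⟩ : D) = ⟨X ξ, hm⟩ + ⟨X' ξ, hm'⟩ from rfl, map_add,
    he, he']
  simp only [add_apply]
  abel

theorem HasCommutator.smul (a : ℂ) (h : HasCommutator D Aop X Y) :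
    HasCommutator D Aop (a • X) (a • Y) := fun ξ => by
  obtain ⟨hm, he⟩ := h ξ
  refine ⟨D.smul_mem a hm, ?_⟩
  rw [show (⟨(a • X) ξ, D.smul_mem a hm⟩ : D) = a • ⟨X ξ, hm⟩ from rfl, map_smul, he]
  simp only [smul_apply, smul_add]

theorem HasCommutator.sum {ι : Type*} {s : Finset ι} {f g : ι → ℋ →L[ℂ] ℋ}
    (h : ∀ i ∈ s, HasCommutator D Aop (f i) (g i)) :
    HasCommutator D Aop (∑ i ∈ s, f i) (∑ i ∈ s, g i) := by
  induction s using Finset.induction_on with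
  | empty => simpa using hasCommutator_zero
  | insert a s ha ih =>
    rw [Finset.sum_insert ha, Finset.sum_insert ha]
    exact (h a (Finset.mem_insert_self a s)).add (ih fun i hi => h i (Finset.mem_insert_of_mem hi))

theorem HasCommutator.comp (hX : HasCommutator D Aop X Y) (hW : HasCommutator D Aop W V) :
    HasCommutator D Aop (X.comp W) (X.comp V + Y.comp W) := fun ξ => by
  obtain ⟨hWm, hWe⟩ := hW ξ
  obtain ⟨hXm, hXe⟩ := hX ⟨W ξ, hWm⟩
  refine ⟨hXm, ?_⟩
  rw [show (⟨(X.comp W) ξ, hXm⟩ : D) = ⟨X (W ξ), hXm⟩ from rfl, hXe, hWe]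
  simp only [add_apply, ContinuousLinearMap.comp_apply, map_add]
  abel

variable (D Aop) in
def HasCommutatorChain (n : ℕ) (X : ℋ →L[ℂ] ℋ) : Prop :=
  ∃ Y : ℕ → ℋ →L[ℂ] ℋ, Y 0 = X ∧ ∀ j < n, HasCommutator D Aop (Y j) (Y (j + 1))

theorem hasCommutatorChain_zero (X : ℋ →L[ℂ] ℋ) : HasCommutatorChain D Aop 0 X :=
  ⟨fun _ => X, rfl, fun j hj => absurd hj (Nat.not_lt_zero j)⟩

theorem HasCommutatorChain.mono {m n : ℕ} (h : HasCommutatorChain D Aop n X) (hmn : m ≤ n) :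
    HasCommutatorChain D Aop m X :=
  let ⟨Y, hY0, hY⟩ := h
  ⟨Y, hY0, fun j hj => hY j (hj.trans_le hmn)⟩

theorem hasCommutatorChain_succ_iff {n : ℕ} :
    HasCommutatorChain D Aop (n + 1) X ↔
      ∃ Y, HasCommutator D Aop X Y ∧ HasCommutatorChain D Aop n Y := by
  constructor
  · rintro ⟨Y, rfl, hY⟩
    exact ⟨Y 1, hY 0 n.succ_pos, fun j => Y (j + 1), rfl, fun j hj => hY (j + 1) (by omega)⟩
  · rintro ⟨_, hXY, V, rfl, hV⟩
    refine ⟨fun | 0 => X | j + 1 => V j, rfl, ?_⟩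
    rintro (_ | j) hj
    exacts [hXY, hV j (by omega)]

theorem HasCommutatorChain.add {n : ℕ} (hX : HasCommutatorChain D Aop n X)
    (hW : HasCommutatorChain D Aop n W) : HasCommutatorChain D Aop n (X + W) := by
  obtain ⟨Y, rfl, hY⟩ := hX
  obtain ⟨V, rfl, hV⟩ := hW
  exact ⟨Y + V, rfl, fun j hj => (hY j hj).add (hV j hj)⟩

theorem HasCommutatorChain.neg {n : ℕ} (hX : HasCommutatorChain D Aop n X) :
    HasCommutatorChain D Aop n (-X) := by
  obtain ⟨Y, rfl, hY⟩ := hX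
  exact ⟨-Y, rfl, fun j hj => by simpa using (hY j hj).smul (-1)⟩

theorem HasCommutatorChain.sub {n : ℕ} (hX : HasCommutatorChain D Aop n X)
    (hW : HasCommutatorChain D Aop n W) : HasCommutatorChain D Aop n (X - W) := by
  simpa only [sub_eq_add_neg] using hX.add hW.neg

theorem HasCommutatorChain.comp {n : ℕ} (hX : HasCommutatorChain D Aop n X)
    (hW : HasCommutatorChain D Aop n W) : HasCommutatorChain D Aop n (X.comp W) := by
  obtain ⟨Y, rfl, hY⟩ := hX
  obtain ⟨V, rfl, hV⟩ := hW
  -- the Leibniz rule `ad^j (X W) = ∑ i, C(j, i) ad^i X ad^(j-i) W`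
  refine ⟨fun j => ∑ i ∈ Finset.range (j + 1), j.choose i • (Y i).comp (V (j - i)), by simp,
    fun j hj => ?_⟩
  have hterm : ∀ i ∈ Finset.range (j + 1), HasCommutator D Aop (j.choose i • (Y i).comp (V (j - i)))
      (j.choose i • ((Y i).comp (V (j + 1 - i)) + (Y (i + 1)).comp (V (j - i)))) := by
    intro i hi
    rw [show j + 1 - i = j - i + 1 by grind, ← Nat.cast_smul_eq_nsmul ℂ, ← Nat.cast_smul_eq_nsmul ℂ]
    exact ((hY i (by grind)).comp (hV (j - i) (by omega))).smul _
  have hsum := HasCommutator.sum hterm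
  simp only [smul_add, Finset.sum_add_distrib] at hsum
  convert hsum using 1
  exact Finset.sum_choose_succ_nsmul (fun i l => (Y i).comp (V l)) j

theorem HasCommutatorChain.inCn (hsym : ∀ u v : D, ⟪Aop u, (v : ℋ)⟫_ℂ = ⟪(u : ℋ), Aop v⟫_ℂ)
    {n : ℕ} (h : HasCommutatorChain D Aop n X) : InCn D Aop n X := by
  obtain ⟨Y, rfl, hY⟩ := h
  intro k hk
  refine ⟨Y k, ?_⟩
  induction k with
  | zero => exact adExistsN_zero _
  | succ k ih =>
    refine (ih (by omega)).succ_iff.mpr fun ξ hξ η hη => ?_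
    have hξD := (mem_domPow_succ_iff.mp hξ).1
    have hηD := (mem_domPow_succ_iff.mp hη).1
    rw [Aext_of_mem hξD, Aext_of_mem hηD]
    exact (hY k (by omega)).inner_eq hsym ⟨ξ, hξD⟩ ⟨η, hηD⟩

theorem IsSelfAdjointOp.hasCommutatorChain_of_inCn [CompleteSpace ℋ]
    (hA : IsSelfAdjointOp D Aop) {n : ℕ} (h : InCn D Aop n X) : HasCommutatorChain D Aop n X := by
  choose Z hZ using h
  refine ⟨fun k => if hk : k ≤ n then Z k hk else 0, by simpa using (hZ 0 n.zero_le).eq_of_zero,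
    fun j hj => ?_⟩
  simp only [dif_pos hj.le, dif_pos (Nat.succ_le_of_lt hj)]
  exact hA.hasCommutator_of_domPow j ((hZ j _).succ_iff.mp (hZ (j + 1) _))

theorem IsSelfAdjointOp.inCn_iff_hasCommutatorChain [CompleteSpace ℋ]
    (hA : IsSelfAdjointOp D Aop) {n : ℕ} : InCn D Aop n X ↔ HasCommutatorChain D Aop n X :=
  ⟨hA.hasCommutatorChain_of_inCn, HasCommutatorChain.inCn hA.2.1⟩

theorem IsSelfAdjointOp.add_symmetric (hA : IsSelfAdjointOp D Aop)
    (hB : (B : ℋ →ₗ[ℂ] ℋ).IsSymmetric) :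
    IsSelfAdjointOp D (Aop + B.toLinearMap.comp D.subtype) := by
  obtain ⟨hD, hsym, hmax⟩ := hA
  have hBsym : ∀ x y : ℋ, ⟪B x, y⟫_ℂ = ⟪x, B y⟫_ℂ := hB
  refine ⟨hD, fun u v => ?_, fun v w h => hmax v (w - B v) fun u => ?_⟩
  · simp only [LinearMap.add_apply, LinearMap.comp_apply, ContinuousLinearMap.coe_coe,
      Submodule.subtype_apply]
    rw [inner_add_left, inner_add_right, hsym, hBsym]
  · have hu := h u
    simp only [LinearMap.add_apply, LinearMap.comp_apply, ContinuousLinearMap.coe_coe,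
      Submodule.subtype_apply] at hu
    rw [inner_add_left, hBsym] at hu
    rw [inner_sub_right]
    linear_combination hu

theorem HasCommutator.add_bounded (h : HasCommutator D Aop X Y) :
    HasCommutator D (Aop + B.toLinearMap.comp D.subtype) X (Y + B.comp X - X.comp B) := by
  intro ξ
  obtain ⟨hm, he⟩ := h ξ
  refine ⟨hm, ?_⟩
  simp only [LinearMap.add_apply, LinearMap.comp_apply, ContinuousLinearMap.coe_coe,
    Submodule.subtype_apply, he, map_add, add_apply, sub_apply, ContinuousLinearMap.comp_apply]
  abel

theorem HasCommutatorChain.add_bounded :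
    ∀ {n : ℕ} {X : ℋ →L[ℂ] ℋ}, HasCommutatorChain D Aop n X →
      HasCommutatorChain D Aop (n - 1) B →
        HasCommutatorChain D (Aop + B.toLinearMap.comp D.subtype) n X
  | 0, X, _, _ => hasCommutatorChain_zero X
  | n + 1, X, hX, hB => by
    obtain ⟨Y, hXY, hY⟩ := hasCommutatorChain_succ_iff.mp hX
    have hXn := hX.mono n.le_succ
    have hBn : HasCommutatorChain D Aop n B := hB
    exact hasCommutatorChain_succ_iff.mpr ⟨_, hXY.add_bounded,
      ((hY.add (hBn.comp hXn)).sub (hXn.comp hBn)).add_bounded (hBn.mono (n.sub_le 1))⟩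

end

theorem stmt_16_general {ℋ : Type*} [NormedAddCommGroup ℋ] [InnerProductSpace ℂ ℋ] [CompleteSpace ℋ]
    (D : Submodule ℂ ℋ) (Aop : ↥D →ₗ[ℂ] ℋ) (hA : IsSelfAdjointOp D Aop)
    (p : ℕ) (B : ℋ →L[ℂ] ℋ) (hBsa : IsSelfAdjoint B)
    (hBC : InCn D Aop (p - 1) B) :
    IsSelfAdjointOp D (Aop + B.toLinearMap.comp D.subtype) ∧
      ∀ k, k ≤ p → ∀ X : ℋ →L[ℂ] ℋ,
        InCn D Aop k X ↔ InCn D (Aop + B.toLinearMap.comp D.subtype) k X := by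
  have hAB := hA.add_symmetric hBsa.isSymmetric
  refine ⟨hAB, fun k hk X => ?_⟩
  have hB := hA.hasCommutatorChain_of_inCn hBC
  have hB' : HasCommutatorChain D (Aop + B.toLinearMap.comp D.subtype) (p - 1) B :=
    hB.add_bounded (hB.mono (Nat.sub_le _ 1))
  have hunperturb :
      Aop + B.toLinearMap.comp D.subtype + (-B).toLinearMap.comp D.subtype = Aop := by
    ext; simp
  rw [hA.inCn_iff_hasCommutatorChain, hAB.inCn_iff_hasCommutatorChain]
  refine ⟨fun hX => hX.add_bounded (hB.mono (by omega)), fun hX => ?_⟩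
  simpa only [hunperturb] using hX.add_bounded (hB'.neg.mono (by omega))

/-- if `A` is self-adjoint and `B = B* ∈ C_{p−1}(A)`, then `A + B` (with
domain `Dom A`) is self-adjoint and `C_k(A) = C_k(A+B)` for every `k = 0,1,…,p`. -/
theorem stmt_16 {ℋ : Type*} [NormedAddCommGroup ℋ] [InnerProductSpace ℂ ℋ] [CompleteSpace ℋ]
    (D : Submodule ℂ ℋ) (Aop : ↥D →ₗ[ℂ] ℋ) (hA : IsSelfAdjointOp D Aop)
    (p : ℕ) (hp : 0 < p) (B : ℋ →L[ℂ] ℋ) (hBsa : IsSelfAdjoint B)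
    (hBC : InCn D Aop (p - 1) B) :
    IsSelfAdjointOp D (Aop + B.toLinearMap.comp D.subtype) ∧
      ∀ k, k ≤ p → ∀ X : ℋ →L[ℂ] ℋ,
        InCn D Aop k X ↔ InCn D (Aop + B.toLinearMap.comp D.subtype) k X :=
  stmt_16_general D Aop hA p B hBsa hBC
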